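/- arXiv:1206.5406 — 2 statements merged into one kernel-verified Lean document; each statement's English description precedes it below -/
import Mathlib

section
/- Let d ≥ 1, let v : ℝ × ℝ^d → ℝ^d be a velocity field, and let X : ℝ × ℝ × ℝ^d → ℝ^d be a flow of v satisfying the cocycle property X(s, t, X(t, r, x)) = X(s, r, x) for all s, t, r, x. Let ρ₀, ρ₁ : ℝ^d → ℝ and define ρ : ℝ × ℝ^d → ℝ by ρ(t, x) = (1 − t)·ρ₀(X(0, t, x)) + t·ρ₁(X(1, t, x)). Then: (i) ρ(0, x) = ρ₀(x) and ρ(1, x) = ρ₁(x) for all x ∈ ℝ^d; and (ii) for every (t, x) ∈ ℝ × ℝ^d, the function s ↦ ρ(s, X(s, t, x)) equals the affine function s ↦ (1 − s)·ρ₀(X(0, t, x)) + s·ρ₁(X(1, t, x)); in particular, along each integral curve, s ↦ ρ(s, X(s, t, x)) is the unique minimizer of g ↦ ∫₀¹ (g′(σ))² dσ over all continuously differentiable g : [0,1] → ℝ with g(0) = ρ₀(X(0, t, x)) and g(1) = ρ₁(X(1, t, x)). -/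
/-- Representation formula (Lemma 2.1): given a flow `X` of a velocity field `v`
satisfying the cocycle property, the function
`ρ t x = (1 - t) * ρ₀ (X 0 t x) + t * ρ₁ (X 1 t x)` satisfies the prescribed initial
and final conditions, is affine along each integral curve of the flow, and along each
integral curve it is the unique minimizer of `g ↦ ∫₀¹ (g′ σ)² dσ` among continuously
differentiable functions with the prescribed endpoint values. -/
theorem representation_formula_least_squares
    (d : ℕ) (hd : 1 ≤ d)
    (v : ℝ → EuclideanSpace ℝ (Fin d) → EuclideanSpace ℝ (Fin d))
    (X : ℝ → ℝ → EuclideanSpace ℝ (Fin d) → EuclideanSpace ℝ (Fin d))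
    (hX0 : ∀ (t : ℝ) (x : EuclideanSpace ℝ (Fin d)), X t t x = x)
    (hX' : ∀ (s t : ℝ) (x : EuclideanSpace ℝ (Fin d)),
      HasDerivAt (fun σ => X σ t x) (v s (X s t x)) s)
    (hcoc : ∀ (s t r : ℝ) (x : EuclideanSpace ℝ (Fin d)), X s t (X t r x) = X s r x)
    (ρ₀ ρ₁ : EuclideanSpace ℝ (Fin d) → ℝ)
    (ρ : ℝ → EuclideanSpace ℝ (Fin d) → ℝ)
    (hρ : ∀ (t : ℝ) (x : EuclideanSpace ℝ (Fin d)),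
      ρ t x = (1 - t) * ρ₀ (X 0 t x) + t * ρ₁ (X 1 t x)) :
    (∀ x : EuclideanSpace ℝ (Fin d), ρ 0 x = ρ₀ x ∧ ρ 1 x = ρ₁ x) ∧
    (∀ (t : ℝ) (x : EuclideanSpace ℝ (Fin d)) (s : ℝ),
      ρ s (X s t x) = (1 - s) * ρ₀ (X 0 t x) + s * ρ₁ (X 1 t x)) ∧
    (∀ (t : ℝ) (x : EuclideanSpace ℝ (Fin d)) (g g' : ℝ → ℝ),
      (∀ σ ∈ Set.Icc (0 : ℝ) 1, HasDerivAt g (g' σ) σ) →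
      ContinuousOn g' (Set.Icc (0 : ℝ) 1) →
      g 0 = ρ₀ (X 0 t x) → g 1 = ρ₁ (X 1 t x) →
        ((ρ₁ (X 1 t x) - ρ₀ (X 0 t x)) ^ 2 ≤ ∫ σ in (0 : ℝ)..1, (g' σ) ^ 2) ∧
        ((∫ σ in (0 : ℝ)..1, (g' σ) ^ 2) = (ρ₁ (X 1 t x) - ρ₀ (X 0 t x)) ^ 2 ↔
          ∀ σ ∈ Set.Icc (0 : ℝ) 1, g σ = ρ σ (X σ t x))) := by
  have huIcc : Set.uIcc (0 : ℝ) 1 = Set.Icc (0 : ℝ) 1 := Set.uIcc_of_le zero_le_one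
  -- part (ii) generic
  have haff : ∀ (t : ℝ) (x : EuclideanSpace ℝ (Fin d)) (s : ℝ),
      ρ s (X s t x) = (1 - s) * ρ₀ (X 0 t x) + s * ρ₁ (X 1 t x) := by
    intro t x s
    rw [hρ, hcoc, hcoc]
  refine ⟨?_, haff, ?_⟩
  · intro x
    constructor
    · rw [hρ]; simp [hX0]
    · rw [hρ]; simp [hX0]
  · intro t x g g' hg hg' hg0 hg1
    set a := ρ₀ (X 0 t x) with ha
    set b := ρ₁ (X 1 t x) with hb
    set c : ℝ := b - a with hc
    have hg'c : ContinuousOn g' (Set.uIcc (0 : ℝ) 1) := huIcc ▸ hg'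
    have hI1 : IntervalIntegrable g' MeasureTheory.volume 0 1 :=
      hg'c.intervalIntegrable
    have hI2 : IntervalIntegrable (fun σ => (g' σ) ^ 2) MeasureTheory.volume 0 1 :=
      (hg'c.pow 2).intervalIntegrable
    have hFTC : (∫ σ in (0:ℝ)..1, g' σ) = b - a := by
      rw [intervalIntegral.integral_eq_sub_of_hasDerivAt (fun σ hσ => hg σ (huIcc ▸ hσ)) hI1,
        hg0, hg1]
    have key : (∫ σ in (0:ℝ)..1, (g' σ - c) ^ 2)
        = (∫ σ in (0:ℝ)..1, (g' σ) ^ 2) - c ^ 2 := by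
      have e : (fun σ => (g' σ - c) ^ 2)
          = fun σ => (g' σ) ^ 2 - (2 * c * g' σ - c ^ 2) := by
        funext σ; ring
      rw [e, intervalIntegral.integral_sub hI2
          (((hI1.const_mul (2 * c)).sub (intervalIntegrable_const))),
        intervalIntegral.integral_sub (hI1.const_mul (2 * c)) intervalIntegrable_const,
        intervalIntegral.integral_const_mul, hFTC, intervalIntegral.integral_const]
      simp [hc]; ring
    have hnn : 0 ≤ ∫ σ in (0:ℝ)..1, (g' σ - c) ^ 2 :=
      intervalIntegral.integral_nonneg zero_le_one (fun σ _ => sq_nonneg _)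
    constructor
    · have : c ^ 2 ≤ ∫ σ in (0:ℝ)..1, (g' σ) ^ 2 := by linarith
      simpa [hc] using this
    constructor
    · -- equality → g equals ρ along the curve
      intro heq
      have hz : (∫ σ in (0:ℝ)..1, (g' σ - c) ^ 2) = 0 := by
        rw [key, heq]; simp [hc]
      -- continuous nonneg with zero integral is zero on Icc
      have hq : ContinuousOn (fun σ => (g' σ - c) ^ 2) (Set.Icc (0:ℝ) 1) :=
        ((hg'.sub continuousOn_const).pow 2)
      have hae : (fun σ => (g' σ - c) ^ 2)
          =ᵐ[MeasureTheory.volume.restrict (Set.Ioc (0:ℝ) 1)] 0 := by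
        refine (intervalIntegral.integral_eq_zero_iff_of_le_of_nonneg_ae zero_le_one
          (Filter.Eventually.of_forall fun σ => sq_nonneg _) ?_).1 hz
        exact ((hg'c.sub continuousOn_const).pow 2).intervalIntegrable
      have hae' : (fun σ => (g' σ - c) ^ 2)
          =ᵐ[MeasureTheory.volume.restrict (Set.Icc (0:ℝ) 1)] 0 := by
        rwa [MeasureTheory.Measure.restrict_congr_set MeasureTheory.Ioc_ae_eq_Icc] at hae
      have hEq : Set.EqOn (fun σ => (g' σ - c) ^ 2) 0 (Set.Icc (0:ℝ) 1) :=
        MeasureTheory.Measure.eqOn_Icc_of_ae_eq MeasureTheory.volume (by norm_num)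
          hae' hq continuousOn_const
      have hg'c' : ∀ σ ∈ Set.Icc (0:ℝ) 1, g' σ = c := by
        intro σ hσ
        have h0 : (g' σ - c) ^ 2 = 0 := hEq hσ
        have := pow_eq_zero_iff (two_ne_zero) |>.mp h0
        linarith
      -- conclude g is affine
      have hgcont : ContinuousOn g (Set.Icc (0:ℝ) 1) :=
        fun σ hσ => (hg σ hσ).continuousAt.continuousWithinAt
      have hconst : ∀ σ ∈ Set.Icc (0:ℝ) 1, g σ - c * σ = g 0 - c * 0 := by
        refine constant_of_has_deriv_right_zero
          (hgcont.sub ((continuousOn_const).mul continuousOn_id)) ?_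
        intro y hy
        have hder : HasDerivAt (fun σ => g σ - c * σ) (g' y - c) y :=
          (hg y (Set.Ico_subset_Icc_self hy)).sub
            ((hasDerivAt_id y).const_mul c |>.congr_deriv (by ring))
        rw [hg'c' y (Set.Ico_subset_Icc_self hy), sub_self] at hder
        exact hder.hasDerivWithinAt
      intro σ hσ
      have := hconst σ hσ
      rw [haff t x σ]
      have : g σ = g 0 + c * σ := by linarith [hconst σ hσ]
      rw [this, hg0, hc]; ring
    · -- g equals ρ along the curve → equality
      intro hgeq
      have hg'eq : ∀ σ ∈ Set.Icc (0:ℝ) 1, g' σ = c := by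
        intro σ hσ
        have h1 : HasDerivWithinAt g (g' σ) (Set.Icc (0:ℝ) 1) σ :=
          (hg σ hσ).hasDerivWithinAt
        have h2 : HasDerivWithinAt g c (Set.Icc (0:ℝ) 1) σ := by
          have haffd : HasDerivWithinAt (fun τ : ℝ => (1 - τ) * a + τ * b) c
              (Set.Icc (0:ℝ) 1) σ := by
            have h := ((hasDerivAt_id σ).const_mul (b - a)).add_const a
            have h2 : (fun y : ℝ => (b - a) * id y + a)
                = fun τ : ℝ => (1 - τ) * a + τ * b := by
              funext τ; simp only [id]; ring
            rw [h2] at h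
            have h3 : HasDerivAt (fun τ : ℝ => (1 - τ) * a + τ * b) c σ := by
              simpa [hc] using h
            exact h3.hasDerivWithinAt
          refine haffd.congr (fun τ hτ => ?_) ?_
          · rw [hgeq τ hτ, haff t x τ]
          · rw [hgeq σ hσ, haff t x σ]
        exact (uniqueDiffOn_Icc zero_lt_one σ hσ).eq_deriv _ h1 h2
      have : (∫ σ in (0:ℝ)..1, (g' σ) ^ 2) = ∫ σ in (0:ℝ)..1, c ^ 2 := by
        refine intervalIntegral.integral_congr fun σ hσ => ?_
        rw [hg'eq σ (huIcc ▸ hσ)]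
      rw [this]
      simp [hc]
end

section
/- Let d ≥ 1, let v : ℝ × ℝ^d → ℝ^d be a velocity field, and let X : ℝ × ℝ × ℝ^d → ℝ^d be a flow of v satisfying the cocycle property X(s, t, X(t, r, x)) = X(s, r, x) for all s, t, r, x. Let ρ₀, ρ₁ : ℝ^d → ℝ and define ρ(t, x) = (1 − t)·ρ₀(X(0, t, x)) + t·ρ₁(X(1, t, x)). Assume ρ is differentiable. Then for every (t, x) ∈ ℝ × ℝ^d, the residual of the transport equation satisfies ∂ₜρ(t, x) + ⟨v(t, x), ∇ₓρ(t, x)⟩ = ρ₁(X(1, t, x)) − ρ₀(X(0, t, x)). -/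
/-- The residual of the transport equation for the representation formula
`ρ t x = (1 - t) * ρ₀ (X 0 t x) + t * ρ₁ (X 1 t x)` is
`∂ₜρ(t,x) + ⟨v(t,x), ∇ₓρ(t,x)⟩ = ρ₁ (X 1 t x) - ρ₀ (X 0 t x)`. -/
theorem transport_residual_of_representation_formula
    (d : ℕ) (hd : 1 ≤ d)
    (v : ℝ → EuclideanSpace ℝ (Fin d) → EuclideanSpace ℝ (Fin d))
    (X : ℝ → ℝ → EuclideanSpace ℝ (Fin d) → EuclideanSpace ℝ (Fin d))
    (hX0 : ∀ (t : ℝ) (x : EuclideanSpace ℝ (Fin d)), X t t x = x)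
    (hX' : ∀ (s t : ℝ) (x : EuclideanSpace ℝ (Fin d)),
      HasDerivAt (fun σ => X σ t x) (v s (X s t x)) s)
    (hcoc : ∀ (s t r : ℝ) (x : EuclideanSpace ℝ (Fin d)), X s t (X t r x) = X s r x)
    (ρ₀ ρ₁ : EuclideanSpace ℝ (Fin d) → ℝ)
    (ρ : ℝ → EuclideanSpace ℝ (Fin d) → ℝ)
    (hρ : ∀ (t : ℝ) (x : EuclideanSpace ℝ (Fin d)),
      ρ t x = (1 - t) * ρ₀ (X 0 t x) + t * ρ₁ (X 1 t x))
    (hdiff : Differentiable ℝ (fun p : ℝ × EuclideanSpace ℝ (Fin d) => ρ p.1 p.2)) :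
    ∀ (t : ℝ) (x : EuclideanSpace ℝ (Fin d)),
      deriv (fun s => ρ s x) t + (inner ℝ (v t x) (gradient (fun y => ρ t y) x) : ℝ) =
        ρ₁ (X 1 t x) - ρ₀ (X 0 t x) := by
  intro t x
  have hFd : HasFDerivAt (fun p : ℝ × EuclideanSpace ℝ (Fin d) => ρ p.1 p.2)
      (fderiv ℝ (fun p : ℝ × EuclideanSpace ℝ (Fin d) => ρ p.1 p.2) (t, x)) (t, x) :=
    (hdiff (t, x)).hasFDerivAt
  set L := fderiv ℝ (fun p : ℝ × EuclideanSpace ℝ (Fin d) => ρ p.1 p.2) (t, x) with hL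
  have hγ : HasDerivAt (fun s => ((s, X s t x) : ℝ × EuclideanSpace ℝ (Fin d)))
      (1, v t x) t := by
    have h1 : HasDerivAt (fun s : ℝ => s) 1 t := hasDerivAt_id t
    have h2 := hX' t t x
    rw [hX0] at h2
    exact h1.prodMk h2
  have hFd' : HasFDerivAt (fun p : ℝ × EuclideanSpace ℝ (Fin d) => ρ p.1 p.2)
      L (t, X t t x) := by rw [hX0]; exact hFd
  have hg : HasDerivAt (fun s => ρ s (X s t x)) (L (1, v t x)) t := by
    exact hFd'.comp_hasDerivAt t hγ
  have hgeq : (fun s => ρ s (X s t x)) =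
      fun s => (1 - s) * ρ₀ (X 0 t x) + s * ρ₁ (X 1 t x) := by
    funext s
    rw [hρ, hcoc, hcoc]
  have hg2 : HasDerivAt (fun s => ρ s (X s t x))
      (ρ₁ (X 1 t x) - ρ₀ (X 0 t x)) t := by
    rw [hgeq]
    have ha : HasDerivAt (fun s : ℝ => (1 - s) * ρ₀ (X 0 t x))
        (-ρ₀ (X 0 t x)) t := by
      have : HasDerivAt (fun s : ℝ => (1 - s)) (-1) t := by
        exact ((hasDerivAt_const t (1:ℝ)).sub (hasDerivAt_id' t)).congr_deriv (by norm_num)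
      simpa using this.mul_const (ρ₀ (X 0 t x))
    have hb : HasDerivAt (fun s : ℝ => s * ρ₁ (X 1 t x))
        (ρ₁ (X 1 t x)) t := by
      simpa using (hasDerivAt_id t).mul_const (ρ₁ (X 1 t x))
    exact (ha.add hb).congr_deriv (by ring)
  have hkey : L (1, v t x) = ρ₁ (X 1 t x) - ρ₀ (X 0 t x) := hg.unique hg2
  have ht : HasDerivAt (fun s => ρ s x) (L (1, 0)) t := by
    have hc : HasDerivAt (fun s : ℝ => ((s, x) : ℝ × EuclideanSpace ℝ (Fin d))) (1, 0) t :=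
      (hasDerivAt_id t).prodMk (hasDerivAt_const t x)
    exact hFd.comp_hasDerivAt t hc
  have hx : HasFDerivAt (fun y : EuclideanSpace ℝ (Fin d) => ρ t y)
      (L.comp (ContinuousLinearMap.inr ℝ ℝ (EuclideanSpace ℝ (Fin d)))) x := by
    have hc : HasFDerivAt (fun y : EuclideanSpace ℝ (Fin d) => ((t, y) : ℝ × EuclideanSpace ℝ (Fin d)))
        (ContinuousLinearMap.inr ℝ ℝ (EuclideanSpace ℝ (Fin d))) x :=
      (hasFDerivAt_const t x).prodMk (hasFDerivAt_id x)
    exact hFd.comp x hc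
  have hgradeq : gradient (fun y : EuclideanSpace ℝ (Fin d) => ρ t y) x =
      (InnerProductSpace.toDual ℝ (EuclideanSpace ℝ (Fin d))).symm
        (L.comp (ContinuousLinearMap.inr ℝ ℝ (EuclideanSpace ℝ (Fin d)))) :=
    hx.hasGradientAt.gradient
  have hinner : (inner ℝ (v t x) (gradient (fun y : EuclideanSpace ℝ (Fin d) => ρ t y) x) : ℝ)
      = L (0, v t x) := by
    rw [hgradeq, real_inner_comm]
    simp [InnerProductSpace.toDual_symm_apply]
  rw [ht.deriv, hinner, ← hkey, ← map_add]
  norm_num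
end
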